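/- arXiv:2005.01830 — 7 statements merged into one kernel-verified Lean document; each statement's English description precedes it below -/
import Mathlib

section
/- Let Γ be a simple graph and v₁, v₂ distinct vertices. If v₁ and v₂ are adjacent, then every vertex dominating v₁ is adjacent to every vertex dominating v₂. In particular, if additionally v₁ dominates v₂, then the set U(v₁) of vertices dominating v₁ spans a complete subgraph of Γ. -/
/-!
Domination is transitive, and for adjacent `v₁ ~ v₂` with `u ≥ v₁`, `w ≥ v₂` the edge `v₁v₂`
is pushed onto `u` and then onto `w`: `v₂ ∈ st u`, so either `u ~ v₂` and hence `u ∈ st w`, or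
`u = v₂`, in which case `v₁ ∈ st w` and domination by `u` gives `w ∈ st u`.
If moreover `v₁ ≥ v₂`, transitivity makes every vertex of `U(v₁)` dominate `v₂`, so any two
of them are adjacent.
-/

/-- `v` dominates `w` in the graph `G`: the link of `w` is contained in the star of `v`. -/
def SimpleGraph.Dominates {V : Type*} (G : SimpleGraph V) (v w : V) : Prop :=
  ∀ u : V, G.Adj u w → (G.Adj u v ∨ u = v)

namespace SimpleGraph

variable {V : Type*} {G : SimpleGraph V} {u v w : V}

theorem Dominates.trans (huv : G.Dominates u v) (hvw : G.Dominates v w) : G.Dominates u w := by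
  intro x hxw
  rcases hvw x hxw with hxv | rfl
  · exact huv x hxv
  · rcases huv w hxw.symm with hwu | rfl
    · rcases hvw u hwu.symm with huv' | rfl
      · exact Or.inl huv'.symm
      · exact Or.inr rfl
    · exact Or.inl hxw

theorem Dominates.adj_of_adj {v₁ v₂ : V} (hadj : G.Adj v₁ v₂) (hu : G.Dominates u v₁)
    (hw : G.Dominates w v₂) (huw : u ≠ w) : G.Adj u w := by
  rcases hu v₂ hadj.symm with hv₂u | rfl
  · exact (hw u hv₂u.symm).resolve_right huw
  · rcases hw v₁ hadj with hv₁w | rfl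
    · exact ((hu w hv₁w.symm).resolve_right huw.symm).symm
    · exact hadj.symm

theorem isClique_setOf_dominates {v₁ v₂ : V} (hadj : G.Adj v₁ v₂) (hdom : G.Dominates v₁ v₂) :
    G.IsClique {u : V | G.Dominates u v₁} :=
  fun _ hu _ hw huw => Dominates.adj_of_adj hadj hu (hw.trans hdom) huw

end SimpleGraph

theorem forced_adjacency_general {V : Type*} (G : SimpleGraph V) (v₁ v₂ : V)
    (hadj : G.Adj v₁ v₂) :
    (∀ u w : V, G.Dominates u v₁ → G.Dominates w v₂ → u ≠ w → G.Adj u w) ∧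
    (G.Dominates v₁ v₂ → G.IsClique {u : V | G.Dominates u v₁}) :=
  ⟨fun _ _ hu hw huw => hu.adj_of_adj hadj hw huw,
    SimpleGraph.isClique_setOf_dominates hadj⟩

/-- If `v₁` and `v₂` are distinct adjacent vertices, then every vertex dominating `v₁`
is adjacent to every (distinct) vertex dominating `v₂`; in particular, if additionally
`v₁` dominates `v₂`, then the set `U(v₁)` of vertices dominating `v₁` is a clique. -/
theorem forced_adjacency {V : Type*} [Fintype V] (G : SimpleGraph V) (v₁ v₂ : V)
    (hne : v₁ ≠ v₂) (hadj : G.Adj v₁ v₂) :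
    (∀ u w : V, G.Dominates u v₁ → G.Dominates w v₂ → u ≠ w → G.Adj u w) ∧
    (G.Dominates v₁ v₂ → G.IsClique {u : V | G.Dominates u v₁}) :=
  forced_adjacency_general G v₁ v₂ hadj
end

section
/- Let F be a free group on a finite set W, let R be a finite index normal subgroup of F with quotient map q : F → G. Define Aut(F; R) as the set of automorphisms φ of F with q ∘ φ = q. Then Aut(F; R) is a subgroup of Aut(F) of finite index. -/
/-!
`Aut(F; R)` is the stabilizer of `q` for the action `(φ • f) x = f (φ⁻¹ x)` of `Aut(F)` on
functions `F → G`. The orbit of `q` consists of homomorphisms `F →* G`, and a homomorphism out of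
a finitely generated group into a finite group is determined by finitely many values, so the
orbit is finite and the stabilizer has finite index.
-/

attribute [local instance] arrowAction

theorem MonoidHom.finite_of_fg {F Q : Type*} [Group F] [Monoid Q] [Group.FG F] [Finite Q] :
    Finite (F →* Q) := by
  obtain ⟨S, hS, hSfin⟩ := Group.fg_iff.mp ‹Group.FG F›
  have : Finite S := hSfin
  refine .of_injective (fun f (s : S) ↦ f s) fun f g hfg ↦ ?_
  exact MonoidHom.eq_of_eqOn_dense hS fun s hs ↦ congrFun hfg ⟨s, hs⟩

section

variable {F Q : Type*} [Group F]

theorem MulAut.mem_stabilizer_arrowAction_iff {f : F → Q} {φ : MulAut F} :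
    φ ∈ MulAction.stabilizer (MulAut F) f ↔ ∀ x, f (φ x) = f x := by
  rw [MulAction.mem_stabilizer_iff, funext_iff]
  change (∀ x, f (φ⁻¹ • x) = f x) ↔ _
  refine ⟨fun h x ↦ ?_, fun h x ↦ ?_⟩
  · simpa [MulAut.smul_def] using (h (φ x)).symm
  · simpa [MulAut.smul_def] using (h (φ⁻¹ x)).symm

theorem MulAut.finite_orbit_monoidHom [Monoid Q] [Finite (F →* Q)] (f : F →* Q) :
    (MulAction.orbit (MulAut F) (f : F → Q)).Finite := by
  refine (Set.finite_range (DFunLike.coe : (F →* Q) → F → Q)).subset ?_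
  rintro _ ⟨φ, rfl⟩
  exact ⟨f.comp (φ⁻¹ : MulAut F).toMonoidHom, rfl⟩

theorem MulAut.finiteIndex_stabilizer_monoidHom [Monoid Q] [Finite (F →* Q)] (f : F →* Q) :
    (MulAction.stabilizer (MulAut F) (f : F → Q)).FiniteIndex := by
  have := (MulAut.finite_orbit_monoidHom f).to_subtype
  have := Finite.of_equiv _ (MulAction.orbitEquivQuotientStabilizer (MulAut F) (f : F → Q))
  exact Subgroup.finiteIndex_of_finite_quotient

end

/-- Let `F` be a free group on a finite set `W`, `R ⊴ F` a normal subgroup of finite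
index, and `q : F → F/R` the quotient map.  Then `Aut(F; R) = {φ ∈ Aut(F) : q ∘ φ = q}`
is a subgroup of `Aut(F)` of finite index. -/
theorem autFR_finiteIndex (W : Type*) [Fintype W] (R : Subgroup (FreeGroup W))
    [R.Normal] [R.FiniteIndex] :
    ∃ A : Subgroup (MulAut (FreeGroup W)),
      ((A : Set (MulAut (FreeGroup W))) =
        {φ : MulAut (FreeGroup W) |
          ∀ x : FreeGroup W, QuotientGroup.mk' R (φ x) = QuotientGroup.mk' R x}) ∧
      A.FiniteIndex := by
  have : Finite (FreeGroup W →* FreeGroup W ⧸ R) := MonoidHom.finite_of_fg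
  exact ⟨_, Set.ext fun _ ↦ MulAut.mem_stabilizer_arrowAction_iff,
    MulAut.finiteIndex_stabilizer_monoidHom (QuotientGroup.mk' R)⟩
end

section
/- Let G be a finite group, q : F → G a surjective homomorphism from the free group F on a finite set W, and D : F → Z[G]^W the crossed homomorphism with D(w) = e_w for w ∈ W (where F acts via q). Then an element Σ_w α_w e_w of Q[G]^W lies in the image of the kernel R = ker q (after tensoring with Q, i.e. is a 1-cycle) if and only if Σ_w α_w (q(w) − 1) = 0 in Q[G]. -/
/-!
Write `d β = Σ_w β_w (q w - 1)`. Fox's fundamental formula `d (D x) = q x - 1` holds because both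
sides are crossed homomorphisms on the free group agreeing on the generators; hence `d` kills
`D R`. Conversely, pick a set-theoretic section `s` of `q`. Modulo the span of `D R`, the class of
`D x` depends only on `q x`, so `g ↦ [D (s g)]` extends linearly to `L : ℚ[G] → ℚ[G]^W / ⟨D R⟩`;
since `e_w g = D (s g * w) - D (s g)`, the quotient map equals `L ∘ d`, so `ker d ⊆ ⟨D R⟩`.
-/

open FreeGroup (of)

section CrossedHom

variable {F A M N : Type*} [Group F] [Ring A] [AddCommGroup M] [Module A M]
  [AddCommGroup N] [Module A N]

def IsCrossedHom (ρ : F →* A) (f : F → M) : Prop :=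
  ∀ x y, f (x * y) = f x + ρ x • f y

namespace IsCrossedHom

variable {ρ : F →* A} {f : F → M}

theorem map_one (hf : IsCrossedHom ρ f) : f 1 = 0 := by
  simpa using hf 1 1

theorem map_inv (hf : IsCrossedHom ρ f) (x : F) : f x⁻¹ = -(ρ x⁻¹ • f x) := by
  have h := hf x⁻¹ x
  rw [inv_mul_cancel, hf.map_one] at h
  exact eq_neg_of_add_eq_zero_left h.symm

theorem map_mul_inv_of_eq (hf : IsCrossedHom ρ f) {x y : F} (hxy : ρ x = ρ y) :
    f (x * y⁻¹) = f x - f y := by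
  rw [hf, hf.map_inv, smul_neg, smul_smul, hxy, ← map_mul, mul_inv_cancel, ρ.map_one, one_smul,
    sub_eq_add_neg]

theorem comp (hf : IsCrossedHom ρ f) (φ : M →ₗ[A] N) : IsCrossedHom ρ (φ ∘ f) := fun x y => by
  simp only [Function.comp_apply, hf x y, map_add, map_smul]

theorem sub_one (ρ : F →* A) : IsCrossedHom ρ fun x => ρ x - 1 := fun x y => by
  simp only [map_mul, smul_eq_mul, mul_sub, mul_one]
  abel

theorem ext_freeGroup {ι : Type*} {ρ : FreeGroup ι →* A} {f g : FreeGroup ι → M}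
    (hf : IsCrossedHom ρ f) (hg : IsCrossedHom ρ g) (h : ∀ i, f (of i) = g (of i)) : f = g := by
  funext x
  induction x using FreeGroup.induction_on with
  | C1 => rw [hf.map_one, hg.map_one]
  | of i => exact h i
  | inv_of x ih => rw [hf.map_inv, hg.map_inv, ih]
  | mul x y ihx ihy => rw [hf, hg, ihx, ihy]

end IsCrossedHom

end CrossedHom

section Boundary

variable {ι A : Type*} [Fintype ι] [Ring A]

def boundary (c : ι → A) : (ι → A) →ₗ[A] A :=
  ∑ i, (LinearMap.toSpanSingleton A A (c i)).comp (LinearMap.proj i)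

theorem boundary_apply (c : ι → A) (β : ι → A) : boundary c β = ∑ i, β i * c i := by
  simp [boundary]

theorem boundary_single [DecidableEq ι] (c : ι → A) (i : ι) (a : A) :
    boundary c (Pi.single i a) = a * c i := by
  simp [boundary_apply, Pi.single_apply]

theorem IsCrossedHom.boundary_eq_sub_one [DecidableEq ι] {ρ : FreeGroup ι →* A}
    {D : FreeGroup ι → ι → A} (hD : IsCrossedHom ρ D) (hD1 : ∀ i, D (of i) = Pi.single i 1)
    (x : FreeGroup ι) : boundary (fun i => ρ (of i) - 1) (D x) = ρ x - 1 :=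
  congrFun (ext_freeGroup (hD.comp _) (sub_one ρ) fun i => by
    simp [hD1, boundary_single]) x

end Boundary

section Presentation

variable {k W G : Type*} [CommRing k] [Fintype W] [DecidableEq W] [Group G]
  {q : FreeGroup W →* G} {D : FreeGroup W → W → MonoidAlgebra k G}

theorem span_image_ker_le_ker_boundary (hD : IsCrossedHom ((MonoidAlgebra.of k G).comp q) D)
    (hD1 : ∀ w, D (of w) = Pi.single w 1) :
    Submodule.span k (D '' q.ker) ≤
      LinearMap.ker ((boundary fun w => MonoidAlgebra.of k G (q (of w)) - 1).restrictScalars k) := by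
  rw [Submodule.span_le]
  rintro _ ⟨x, hx, rfl⟩
  rw [SetLike.mem_coe, MonoidHom.mem_ker] at hx
  have hDx := hD.boundary_eq_sub_one hD1 x
  simp only [MonoidHom.comp_apply, hx, map_one, sub_self] at hDx
  exact hDx

theorem exists_mkQ_span_image_ker_eq_comp_boundary (hq : Function.Surjective q)
    (hD : IsCrossedHom ((MonoidAlgebra.of k G).comp q) D) (hD1 : ∀ w, D (of w) = Pi.single w 1) :
    ∃ L : MonoidAlgebra k G →ₗ[k] (W → MonoidAlgebra k G) ⧸ Submodule.span k (D '' q.ker),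
      (Submodule.span k (D '' q.ker)).mkQ =
        L ∘ₗ (boundary fun w => MonoidAlgebra.of k G (q (of w)) - 1).restrictScalars k := by
  set M := Submodule.span k (D '' q.ker)
  set s := Function.surjInv hq
  set L := (MonoidAlgebra.basis G k).constr k fun g => M.mkQ (D (s g))
  have hL : ∀ x, M.mkQ (D x) = L (MonoidAlgebra.of k G (q x)) := by
    intro x
    have hsx : q (s (q x)) = q x := Function.surjInv_eq hq _
    rw [MonoidAlgebra.of_apply, ← MonoidAlgebra.basis_apply, Module.Basis.constr_basis,
      Submodule.mkQ_apply, Submodule.mkQ_apply, Submodule.Quotient.eq,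
      ← hD.map_mul_inv_of_eq (by simp [hsx])]
    exact Submodule.subset_span ⟨_, by simp [hsx], rfl⟩
  refine ⟨L, Module.Basis.ext (Pi.basis fun _ => MonoidAlgebra.basis G k) ?_⟩
  rintro ⟨w, g⟩
  have hedge : Pi.single w (MonoidAlgebra.of k G g) = D (s g * of w) - D (s g) := by
    rw [hD, hD1, add_sub_cancel_left, MonoidHom.comp_apply, Function.surjInv_eq hq,
      ← Pi.single_smul', smul_eq_mul, mul_one]
  rw [Pi.basis_apply, MonoidAlgebra.basis_apply, ← MonoidAlgebra.of_apply, hedge, map_sub,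
    hL, hL, LinearMap.comp_apply, ← hedge, LinearMap.restrictScalars_apply, boundary_single,
    mul_sub, mul_one, ← map_mul, map_mul, Function.surjInv_eq hq, map_sub]

theorem mem_span_image_ker_iff_boundary_eq_zero (hq : Function.Surjective q)
    (hD : IsCrossedHom ((MonoidAlgebra.of k G).comp q) D) (hD1 : ∀ w, D (of w) = Pi.single w 1)
    (α : W → MonoidAlgebra k G) :
    α ∈ Submodule.span k (D '' q.ker) ↔
      boundary (fun w => MonoidAlgebra.of k G (q (of w)) - 1) α = 0 := by
  refine ⟨fun hα => span_image_ker_le_ker_boundary hD hD1 hα, fun hα => ?_⟩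
  obtain ⟨L, hL⟩ := exists_mkQ_span_image_ker_eq_comp_boundary hq hD hD1
  rw [← Submodule.Quotient.mk_eq_zero, ← Submodule.mkQ_apply, hL, LinearMap.comp_apply,
    LinearMap.restrictScalars_apply, hα, map_zero]

end Presentation

theorem cycles_iff_boundary_zero_general (W : Type*) [Fintype W] [DecidableEq W]
    (G : Type*) [Group G] (q : FreeGroup W →* G)
    (hq : Function.Surjective q)
    (D : FreeGroup W → (W → MonoidAlgebra ℚ G))
    (hD1 : ∀ w : W, D (FreeGroup.of w) = Pi.single w 1)
    (hD2 : ∀ x y : FreeGroup W,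
      D (x * y) = D x + fun w => MonoidAlgebra.of ℚ G (q x) * D y w)
    (α : W → MonoidAlgebra ℚ G) :
    α ∈ Submodule.span ℚ (D '' {x : FreeGroup W | x ∈ q.ker}) ↔
      ∑ w : W, α w * (MonoidAlgebra.of ℚ G (q (FreeGroup.of w)) - 1) = 0 := by
  rw [← boundary_apply]
  exact mem_span_image_ker_iff_boundary_eq_zero hq hD2 hD1 α

/-- Let `q : F → G` be a surjection from the free group on a finite set `W` onto a finite
group `G`, with kernel `R`, and let `D : F → ℚ[G]^W` be the crossed homomorphism with
`D(w) = e_w` (where `F` acts through `q`).  An element `Σ_w α_w e_w` of `ℚ[G]^W` is a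
1-cycle (i.e. lies in the rational span of the image of `R`) if and only if
`Σ_w α_w (q(w) − 1) = 0` in `ℚ[G]`. -/
theorem cycles_iff_boundary_zero (W : Type*) [Fintype W] [DecidableEq W]
    (G : Type*) [Group G] [Fintype G] (q : FreeGroup W →* G)
    (hq : Function.Surjective q)
    (D : FreeGroup W → (W → MonoidAlgebra ℚ G))
    (hD1 : ∀ w : W, D (FreeGroup.of w) = Pi.single w 1)
    (hD2 : ∀ x y : FreeGroup W,
      D (x * y) = D x + fun w => MonoidAlgebra.of ℚ G (q x) * D y w)
    (α : W → MonoidAlgebra ℚ G) :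
    α ∈ Submodule.span ℚ (D '' {x : FreeGroup W | x ∈ q.ker}) ↔
      ∑ w : W, α w * (MonoidAlgebra.of ℚ G (q (FreeGroup.of w)) - 1) = 0 :=
  cycles_iff_boundary_zero_general W G q hq D hD1 hD2 α
end

section
/- Let k be a positive integer and m ≥ 6k+3 with m even. Then there exist m-cycles g₁, …, g_k in the symmetric group Sym(m) such that for every pair i ≠ j, the subgroup generated by g_i and g_j is all of Sym(m). -/
/-!
Take `σ = finRotate m` and let `τ i` swap the consecutive points `σ^(3i) x` and `σ^(3i+1) x`;
the cycles are `g i = τ i * σ * (τ i)⁻¹`. Conjugating by `τ i`, the pair `g i, g j` becomes `σ`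
together with `ρ * σ * ρ⁻¹`, `ρ = τ i * τ j`, and the commutator `⁅ρ, σ⁆` is a product of two
disjoint 3-cycles on consecutive points of `σ`, at distance `D = 3 (j - i)`. Its conjugate by
`σ ^ (D + 2)` meets it in exactly one point, so the commutator of the two is a 3-cycle, from which
one recovers a 3-cycle `(x, σ x, σ² x)`. With `σ` it generates every 3-cycle, hence the
alternating group, and `σ` is odd because `m` is even. The bound `6k + 3 ≤ m` leaves the room
`2D + 5 ≤ m` that this needs.
-/

open Finset
open scoped commutatorElement

theorem commutatorElement_mul_mul_of_commute {G : Type*} [Group G] {a b c d : G}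
    (hac : Commute a c) (had : Commute a d) (hbd : Commute b d) (hcd : Commute c d) :
    ⁅b * a, d * c⁆ = ⁅b, c⁆ := by
  have hd : Commute d ⁅b, c⁆ := by
    rw [commutatorElement_def]
    exact ((hbd.symm.mul_right hcd.symm).mul_right hbd.symm.inv_right).mul_right hcd.symm.inv_right
  calc ⁅b * a, d * c⁆ = d * (b * (a * c * a⁻¹) * b⁻¹ * c⁻¹) * d⁻¹ := by
        rw [commutatorElement_def, ← mul_assoc (b * a) d c, (hbd.mul_left had).eq]
        group
    _ = ⁅b, c⁆ := by
        rw [hac.eq, mul_inv_cancel_right, ← commutatorElement_def, hd.eq, mul_inv_cancel_right]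

theorem Subgroup.closure_pair_conj_eq_top {G : Type*} [Group G] (g : G) {a b : G}
    (h : Subgroup.closure {a, b} = ⊤) : Subgroup.closure {g * a * g⁻¹, g * b * g⁻¹} = ⊤ := by
  have := MonoidHom.map_closure (MulAut.conj g).toMonoidHom {a, b}
  rw [h, Set.image_pair, Subgroup.map_top_of_surjective _ (MulAut.conj g).surjective] at this
  simpa using this.symm

namespace Equiv.Perm

open Subgroup

variable {α : Type*} [DecidableEq α]

/-- `threeCycle a b c` sends `a ↦ b ↦ c ↦ a` when `a, b, c` are distinct. -/
def threeCycle (a b c : α) : Perm α := swap a b * swap b c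

section ThreeCycle

variable {a b c d e : α}

theorem threeCycle_apply_left (hab : a ≠ b) (hac : a ≠ c) : threeCycle a b c a = b := by
  simp [threeCycle, swap_apply_of_ne_of_ne hab hac]

theorem threeCycle_apply_mid (hac : a ≠ c) (hbc : b ≠ c) : threeCycle a b c b = c := by
  simp [threeCycle, swap_apply_of_ne_of_ne hac.symm hbc.symm]

theorem threeCycle_apply_right : threeCycle a b c c = a := by
  simp [threeCycle]

theorem threeCycle_apply_of_ne {y : α} (ha : y ≠ a) (hb : y ≠ b) (hc : y ≠ c) :
    threeCycle a b c y = y := by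
  simp [threeCycle, swap_apply_of_ne_of_ne, *]

theorem threeCycle_apply (hab : a ≠ b) (hac : a ≠ c) (hbc : b ≠ c) (y : α) :
    threeCycle a b c y = if y = a then b else if y = b then c else if y = c then a else y := by
  split_ifs with h₁ h₂ h₃ <;> subst_vars
  · exact threeCycle_apply_left hab hac
  · exact threeCycle_apply_mid hac hbc
  · exact threeCycle_apply_right
  · exact threeCycle_apply_of_ne h₁ h₂ h₃

theorem conj_threeCycle (f : Perm α) (a b c : α) :
    f * threeCycle a b c * f⁻¹ = threeCycle (f a) (f b) (f c) := by
  simp only [threeCycle, swap_apply_apply]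
  group

theorem threeCycle_rotate (h : [a, b, c].Nodup) : threeCycle a b c = threeCycle b c a := by
  simp only [List.nodup_cons, List.mem_cons, List.not_mem_nil, or_false, not_or] at h
  obtain ⟨⟨hab, hac⟩, hbc, -⟩ := h
  ext y
  simp only [threeCycle, mul_apply, swap_apply_def]
  split_ifs <;> simp_all

theorem threeCycle_inv (hab : a ≠ b) (hac : a ≠ c) (hbc : b ≠ c) :
    (threeCycle a b c)⁻¹ = threeCycle a c b := by
  rw [inv_eq_iff_eq_inv]
  ext y
  simp only [threeCycle, mul_inv_rev, swap_inv, mul_apply, swap_apply_def]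
  split_ifs <;> simp_all

theorem commutatorElement_threeCycle (h : [a, b, c, d, e].Nodup) :
    ⁅threeCycle a b c, threeCycle c d e⁆ = threeCycle a d c := by
  simp only [List.nodup_cons, List.mem_cons, List.not_mem_nil, or_false, not_or] at h
  obtain ⟨⟨hab, hac, had, hae⟩, ⟨hbc, hbd, hbe⟩, ⟨hcd, hce⟩, hde, -⟩ := h
  ext y
  rw [commutatorElement_def, conj_threeCycle, threeCycle_inv hcd hce hde, mul_apply,
    threeCycle_apply_right, threeCycle_apply_of_ne (Ne.symm had) (Ne.symm hbd) (Ne.symm hcd),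
    threeCycle_apply_of_ne (Ne.symm hae) (Ne.symm hbe) (Ne.symm hce),
    threeCycle_apply hce hcd (Ne.symm hde), threeCycle_apply had hae hde,
    threeCycle_apply had hac (Ne.symm hcd)]
  split_ifs <;> simp_all

theorem commute_threeCycle_of_apply_eq {f : Perm α} (ha : f a = a) (hb : f b = b) (hc : f c = c) :
    Commute f (threeCycle a b c) := by
  rw [commute_iff_eq, ← mul_inv_eq_iff_eq_mul, conj_threeCycle, ha, hb, hc]

theorem threeCycle_mul_threeCycle_fix_fst {x u v y : α} (h : [x, u, v, y].Nodup) :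
    threeCycle x y v * threeCycle x u y = threeCycle x u v := by
  simp only [List.nodup_cons, List.mem_cons, List.not_mem_nil, or_false, not_or] at h
  obtain ⟨⟨hxu, hxv, hxy⟩, ⟨huv, huy⟩, hvy, -⟩ := h
  ext w
  rw [mul_apply, threeCycle_apply hxu hxy huy, threeCycle_apply hxy hxv (Ne.symm hvy),
    threeCycle_apply hxu hxv huv]
  split_ifs <;> simp_all

theorem threeCycle_mul_threeCycle_elim_fst {x a b c : α} (h : [x, a, b, c].Nodup) :
    threeCycle x a b * threeCycle x b c = threeCycle a b c := by
  simp only [List.nodup_cons, List.mem_cons, List.not_mem_nil, or_false, not_or] at h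
  obtain ⟨⟨hxa, hxb, hxc⟩, ⟨hab, hac⟩, hbc, -⟩ := h
  ext w
  rw [mul_apply, threeCycle_apply hxb hxc hbc, threeCycle_apply hxa hxb hab,
    threeCycle_apply hab hac hbc]
  split_ifs <;> simp_all

theorem commute_threeCycle_threeCycle {f : α} (h : [a, b, c, d, e, f].Nodup) :
    Commute (threeCycle a b c) (threeCycle d e f) := by
  simp only [List.nodup_cons, List.mem_cons, List.not_mem_nil, or_false, not_or] at h
  refine commute_threeCycle_of_apply_eq (threeCycle_apply_of_ne ?_ ?_ ?_)
    (threeCycle_apply_of_ne ?_ ?_ ?_) (threeCycle_apply_of_ne ?_ ?_ ?_) <;> tauto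

theorem threeCycle_conj_threeCycle_right {x y : α} (h : [x, y, a, b, c].Nodup) :
    threeCycle a b c * threeCycle x y a * (threeCycle a b c)⁻¹ = threeCycle x y b := by
  simp only [List.nodup_cons, List.mem_cons, List.not_mem_nil, or_false, not_or] at h
  rw [conj_threeCycle, threeCycle_apply_left (by tauto) (by tauto),
    threeCycle_apply_of_ne (by tauto) (by tauto) (by tauto),
    threeCycle_apply_of_ne (by tauto) (by tauto) (by tauto)]

theorem threeCycle_conj_threeCycle_mid (h : [a, b, c, d, e].Nodup) :
    threeCycle b e d * threeCycle a d c * (threeCycle b e d)⁻¹ = threeCycle a b c := by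
  simp only [List.nodup_cons, List.mem_cons, List.not_mem_nil, or_false, not_or] at h
  rw [conj_threeCycle, threeCycle_apply_right,
    threeCycle_apply_of_ne (by tauto) (by tauto) (by tauto),
    threeCycle_apply_of_ne (by tauto) (by tauto) (by tauto)]

end ThreeCycle

theorem threeCycle_mem_of_forall_threeCycle_mem {H : Subgroup (Perm α)} {x y : α} (hxy : x ≠ y)
    (h : ∀ w, w ≠ x → w ≠ y → threeCycle x y w ∈ H) {a b c : α} (habc : [a, b, c].Nodup) :
    threeCycle a b c ∈ H := by
  have hx : ∀ u v, [x, u, v].Nodup → threeCycle x u v ∈ H := by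
    intro u v huv
    simp only [List.nodup_cons, List.mem_cons, List.not_mem_nil, or_false, not_or] at huv
    obtain ⟨⟨hxu, hxv⟩, huv, -⟩ := huv
    obtain rfl | huy := eq_or_ne u y
    · exact h v (Ne.symm hxv) (Ne.symm huv)
    have hyu : threeCycle x u y = (threeCycle x y u)⁻¹ :=
      (threeCycle_inv hxy hxu (Ne.symm huy)).symm
    obtain rfl | hvy := eq_or_ne v y
    · rw [hyu]
      exact H.inv_mem (h u (Ne.symm hxu) huy)
    rw [← threeCycle_mul_threeCycle_fix_fst (y := y) (by simp [*, Ne.symm]), hyu]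
    exact H.mul_mem (h v (Ne.symm hxv) hvy) (H.inv_mem (h u (Ne.symm hxu) huy))
  simp only [List.nodup_cons, List.mem_cons, List.not_mem_nil, or_false, not_or] at habc
  obtain ⟨⟨hab, hac⟩, hbc, -⟩ := habc
  obtain rfl | hxa := eq_or_ne x a
  · exact hx b c (by simp [*])
  obtain rfl | hxb := eq_or_ne x b
  · rw [threeCycle_rotate (by simp [*])]
    exact hx c a (by simp [*, Ne.symm])
  obtain rfl | hxc := eq_or_ne x c
  · rw [← threeCycle_rotate (by simp [*, Ne.symm])]
    exact hx a b (by simp [*, Ne.symm])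
  rw [← threeCycle_mul_threeCycle_elim_fst (x := x) (by simp [*])]
  exact H.mul_mem (hx a b (by simp [*])) (hx b c (by simp [*]))

theorem alternatingGroup_le_of_forall_threeCycle_mem [Fintype α] {H : Subgroup (Perm α)}
    (h : ∀ a b c : α, [a, b, c].Nodup → threeCycle a b c ∈ H) : alternatingGroup α ≤ H := by
  rw [← closure_three_cycles_eq_alternating, closure_le]
  intro g hg
  obtain ⟨a, ha, -⟩ := hg.isCycle
  rw [(hg.eq_swap_mul_swap_iff_mem_support).2 (mem_support.2 ha)]
  exact h _ _ _ ((hg.nodup_iff_mem_support).2 (mem_support.2 ha))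

theorem eq_top_of_alternatingGroup_le [Fintype α] {H : Subgroup (Perm α)}
    (hA : alternatingGroup α ≤ H) {g : Perm α} (hg : g ∈ H) (hsg : sign g = -1) : H = ⊤ := by
  rw [eq_top_iff']
  intro f
  rcases Int.units_eq_one_or (sign f) with hf | hf
  · exact hA (mem_alternatingGroup.2 hf)
  · have hfg : f * g ∈ H := hA (mem_alternatingGroup.2 (by rw [map_mul, hf, hsg]; rfl))
    simpa using H.mul_mem hfg (H.inv_mem hg)

def consecutiveThreeCycle (σ : Perm α) (x : α) : Perm α := threeCycle x (σ x) (σ (σ x))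

theorem consecutiveThreeCycle_pow_apply (σ : Perm α) (x : α) (t : ℕ) :
    consecutiveThreeCycle σ ((σ ^ t) x) =
      threeCycle ((σ ^ t) x) ((σ ^ (t + 1)) x) ((σ ^ (t + 2)) x) := by
  simp only [consecutiveThreeCycle, ← mul_apply, ← pow_succ']

theorem conj_consecutiveThreeCycle {σ f : Perm α} (h : Commute f σ) (x : α) :
    f * consecutiveThreeCycle σ x * f⁻¹ = consecutiveThreeCycle σ (f x) := by
  have hfσ : ∀ y, f (σ y) = σ (f y) := fun y => by rw [← mul_apply, h.eq, mul_apply]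
  simp only [consecutiveThreeCycle, conj_threeCycle, hfσ]

theorem commutatorElement_swap_mul_swap (σ : Perm α) {x y : α}
    (h : [x, σ x, y, σ y, σ (σ y)].Nodup) :
    ⁅swap x (σ x) * swap y (σ y), σ⁆ = consecutiveThreeCycle σ y * consecutiveThreeCycle σ x := by
  simp only [List.nodup_cons, List.mem_cons, List.not_mem_nil, or_false, not_or] at h
  obtain ⟨⟨-, hxy, hxσy, hxσσy⟩, ⟨hσxy, hσxσy, hσxσσy⟩, -⟩ := h
  have hcomm : Commute (swap x (σ x)) (consecutiveThreeCycle σ y) :=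
    commute_threeCycle_of_apply_eq (swap_apply_of_ne_of_ne (Ne.symm hxy) (Ne.symm hσxy))
      (swap_apply_of_ne_of_ne (Ne.symm hxσy) (Ne.symm hσxσy))
      (swap_apply_of_ne_of_ne (Ne.symm hxσσy) (Ne.symm hσxσσy))
  calc ⁅swap x (σ x) * swap y (σ y), σ⁆
      = swap x (σ x) * (swap y (σ y) * (σ * swap y (σ y) * σ⁻¹)) * (σ * swap x (σ x) * σ⁻¹) := by
        simp only [commutatorElement_def, mul_inv_rev, swap_inv]
        group
    _ = consecutiveThreeCycle σ y * consecutiveThreeCycle σ x := by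
        rw [← swap_apply_apply, ← swap_apply_apply]
        exact (congrArg (· * _) hcomm.eq).trans (mul_assoc _ _ _)

section Cycle

variable [Fintype α] {σ : Perm α}

theorem IsCycle.isCycleOn_univ (hσ : σ.IsCycle) (hs : σ.support = univ) :
    σ.IsCycleOn (univ : Finset α) := by
  simpa [← coe_support_eq_set_support, hs] using hσ.isCycleOn

theorem IsCycle.nodup_map_pow_apply (hσ : σ.IsCycle) (hs : σ.support = univ) (x : α)
    (l : List ℕ) (hl : l.Nodup) (hlt : ∀ t ∈ l, t < Fintype.card α) :
    (l.map fun t => (σ ^ t) x).Nodup := by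
  refine hl.map_on fun s hs' t ht hst => ?_
  rw [(hσ.isCycleOn_univ hs).pow_apply_eq_pow_apply (mem_univ x), card_univ] at hst
  exact hst.eq_of_lt_of_lt (hlt s hs') (hlt t ht)

theorem consecutiveThreeCycle_mem_of_mul_mem (hσ : σ.IsCycle) (hs : σ.support = univ)
    {H : Subgroup (Perm α)} (hσH : σ ∈ H) (x : α) {D : ℕ} (hD : 3 ≤ D)
    (hDm : 2 * D + 5 ≤ Fintype.card α)
    (hW : consecutiveThreeCycle σ ((σ ^ D) x) * consecutiveThreeCycle σ x ∈ H) :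
    consecutiveThreeCycle σ ((σ ^ D) x) ∈ H := by
  have hnodup := hσ.nodup_map_pow_apply hs x
  have hpow : ∀ s t : ℕ, (σ ^ s) ((σ ^ t) x) = (σ ^ (s + t)) x := fun s t => by
    rw [← mul_apply, ← pow_add]
  set z : ℕ → Perm α := fun t => consecutiveThreeCycle σ ((σ ^ t) x) with hz
  have hcomm : ∀ s t, s + 3 ≤ t → t + 3 ≤ Fintype.card α → Commute (z s) (z t) := by
    intro s t hst ht
    simp only [hz, consecutiveThreeCycle_pow_apply]
    exact commute_threeCycle_threeCycle
      (hnodup [s, s + 1, s + 2, t, t + 1, t + 2] (by simp; omega) (by simp; omega))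
  replace hW : z D * z 0 ∈ H := by simpa [hz] using hW
  have hK : z (2 * D + 2) * z (D + 2) ∈ H := by
    have := H.mul_mem (H.mul_mem (H.pow_mem hσH (D + 2)) hW) (H.inv_mem (H.pow_mem hσH (D + 2)))
    rwa [← conj_mul, conj_consecutiveThreeCycle (Commute.pow_self σ _),
      conj_consecutiveThreeCycle (Commute.pow_self σ _), hpow, hpow,
      show D + 2 + D = 2 * D + 2 by omega] at this
  -- `z (2D+2) * z (D+2)` meets `z D * z 0` only in `σ^(D+2) x`, where `z D` and `z (D+2)` overlap.
  have hγ : threeCycle ((σ ^ D) x) ((σ ^ (D + 3)) x) ((σ ^ (D + 2)) x) ∈ H := by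
    have h := commutatorElement_mul_mul_of_commute (hcomm 0 (D + 2) (by omega) (by omega))
      (hcomm 0 (2 * D + 2) (by omega) (by omega)) (hcomm D (2 * D + 2) (by omega) (by omega))
      (hcomm (D + 2) (2 * D + 2) (by omega) (by omega))
    have hzz : ⁅z D, z (D + 2)⁆ = threeCycle ((σ ^ D) x) ((σ ^ (D + 3)) x) ((σ ^ (D + 2)) x) := by
      simp only [hz, consecutiveThreeCycle_pow_apply]
      exact commutatorElement_threeCycle
        (hnodup [D, D + 1, D + 2, D + 3, D + 4] (by simp) (by simp; omega))
    rw [← hzz, ← h, commutatorElement_def]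
    exact H.mul_mem (H.mul_mem (H.mul_mem hW hK) (H.inv_mem hW)) (H.inv_mem hK)
  have hγ' : threeCycle ((σ ^ (D + 1)) x) ((σ ^ (D + 4)) x) ((σ ^ (D + 3)) x) ∈ H := by
    have := H.mul_mem (H.mul_mem hσH hγ) (H.inv_mem hσH)
    simpa only [conj_threeCycle, ← mul_apply, ← pow_succ'] using this
  rw [consecutiveThreeCycle_pow_apply, ← threeCycle_conj_threeCycle_mid
    (hnodup [D, D + 1, D + 2, D + 3, D + 4] (by simp) (by simp; omega))]
  exact H.mul_mem (H.mul_mem hγ' hγ) (H.inv_mem hγ')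

theorem alternatingGroup_le_of_consecutiveThreeCycle_mem (hσ : σ.IsCycle)
    (hs : σ.support = univ) {H : Subgroup (Perm α)} (hσH : σ ∈ H) (x : α)
    (hz : consecutiveThreeCycle σ x ∈ H) : alternatingGroup α ≤ H := by
  have hc := hσ.isCycleOn_univ hs
  have hnodup := hσ.nodup_map_pow_apply hs x
  have hm : 2 ≤ Fintype.card α := by simpa [hs] using hσ.two_le_card_support
  have hzt : ∀ t, threeCycle ((σ ^ t) x) ((σ ^ (t + 1)) x) ((σ ^ (t + 2)) x) ∈ H := fun t => by
    rw [← consecutiveThreeCycle_pow_apply, ← conj_consecutiveThreeCycle (Commute.pow_self σ t)]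
    exact H.mul_mem (H.mul_mem (H.pow_mem hσH t) hz) (H.inv_mem (H.pow_mem hσH t))
  have hladder : ∀ t, 2 ≤ t → t < Fintype.card α →
      threeCycle ((σ ^ 0) x) ((σ ^ 1) x) ((σ ^ t) x) ∈ H := by
    intro t ht
    induction t, ht using Nat.le_induction with
    | base => exact fun _ => hzt 0
    | succ t ht ih =>
      intro htm
      by_cases hlast : t + 2 < Fintype.card α
      · rw [← threeCycle_conj_threeCycle_right
          (hnodup [0, 1, t, t + 1, t + 2] (by simp; omega) (by simp; omega))]
        exact H.mul_mem (H.mul_mem (hzt t) (ih (by omega))) (H.inv_mem (hzt t))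
      · -- the consecutive 3-cycle at `σ ^ (m - 1) x` wraps around to `x` and `σ x`
        have h0 : (σ ^ (t + 2)) x = (σ ^ 0) x := by
          rw [show t + 2 = #(univ : Finset α) by simp; omega, hc.pow_card_apply (mem_univ x),
            pow_zero, one_apply]
        have h1 : (σ ^ (t + 3)) x = (σ ^ 1) x := by
          rw [pow_succ', mul_apply, h0, pow_zero, one_apply, pow_one]
        have := hzt (t + 1)
        rwa [h0, h1, threeCycle_rotate (hnodup [t + 1, 0, 1] (by simp; omega) (by simp; omega))]
          at this
  apply alternatingGroup_le_of_forall_threeCycle_mem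
  intro a b c habc
  refine threeCycle_mem_of_forall_threeCycle_mem (x := (σ ^ 0) x) (y := (σ ^ 1) x) ?_ ?_ habc
  · simpa using hnodup [0, 1] (by simp) (by simp; omega)
  · intro w hw0 hw1
    obtain ⟨t, ht, rfl⟩ := hc.exists_pow_eq (mem_univ x) (mem_univ w)
    rw [card_univ] at ht
    rcases t with _ | _ | t
    · exact absurd rfl hw0
    · exact absurd rfl hw1
    · exact hladder (t + 2) (by omega) ht

theorem closure_cycle_conj_swap_mul_swap_eq_top (hσ : σ.IsCycle) (hs : σ.support = univ)
    (he : Even (Fintype.card α)) {x y : α} {D : ℕ} (hy : (σ ^ D) x = y) (hD : 3 ≤ D)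
    (hDm : 2 * D + 5 ≤ Fintype.card α) :
    closure {σ, (swap x (σ x) * swap y (σ y)) * σ * (swap x (σ x) * swap y (σ y))⁻¹} = ⊤ := by
  subst hy
  set ρ := swap x (σ x) * swap ((σ ^ D) x) (σ ((σ ^ D) x))
  set H := closure {σ, ρ * σ * ρ⁻¹}
  have hσH : σ ∈ H := subset_closure (by simp)
  have hW : ⁅ρ, σ⁆ ∈ H := H.mul_mem (subset_closure (by simp)) (H.inv_mem hσH)
  rw [commutatorElement_swap_mul_swap σ (by
    convert hσ.nodup_map_pow_apply hs x [0, 1, D, D + 1, D + 2] (by simp; omega) (by simp; omega)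
      using 1
    simp [pow_succ'])] at hW
  refine eq_top_of_alternatingGroup_le ?_ hσH (g := σ) ?_
  · exact alternatingGroup_le_of_consecutiveThreeCycle_mem hσ hs hσH _
      (consecutiveThreeCycle_mem_of_mul_mem hσ hs hσH x hD hDm hW)
  · rw [hσ.sign, hs, card_univ, he.neg_one_pow]

end Cycle

end Equiv.Perm

theorem pairwise_generating_cycles_sym_general (k m : ℕ) (hm : 6 * k + 3 ≤ m)
    (hme : Even m) :
    ∃ g : Fin k → Equiv.Perm (Fin m),
      (∀ i : Fin k, (g i).IsCycle ∧ (g i).support = Finset.univ) ∧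
      (∀ i j : Fin k, i ≠ j → Subgroup.closure {g i, g j} = ⊤) := by
  set σ := finRotate m
  have hσ : σ.IsCycle := isCycle_finRotate_of_le (by omega)
  have hs : σ.support = univ := support_finRotate_of_le (by omega)
  let x : Fin m := ⟨0, by omega⟩
  let y : Fin k → Fin m := fun i => (σ ^ (3 * (i : ℕ))) x
  let τ : Fin k → Equiv.Perm (Fin m) := fun i => Equiv.swap (y i) (σ (y i))
  refine ⟨fun i => τ i * σ * (τ i)⁻¹,
    fun i => ⟨hσ.conj, by simp [Equiv.Perm.support_conj, hs]⟩, ?_⟩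
  have hlt : ∀ i j : Fin k, i < j →
      Subgroup.closure {τ i * σ * (τ i)⁻¹, τ j * σ * (τ j)⁻¹} = ⊤ := by
    intro i j hij
    have hyj : (σ ^ (3 * ((j : ℕ) - i))) (y i) = y j := by
      simp only [y, ← Equiv.Perm.mul_apply, ← pow_add]
      congr 2
      omega
    have htop := Equiv.Perm.closure_cycle_conj_swap_mul_swap_eq_top hσ hs (by simpa using hme)
      hyj (by omega) (by simp; omega)
    convert Subgroup.closure_pair_conj_eq_top (τ i) htop using 4
    simp [τ, mul_assoc]
  intro i j hij
  rcases hij.lt_or_gt with h | h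
  · exact hlt i j h
  · rw [Set.pair_comm]
    exact hlt j i h

/-- For `k ≥ 1` and even `m ≥ 6k+3`, there are `m`-cycles `g₁, …, g_k` in `Sym(m)` such
that every pair `g_i, g_j` with `i ≠ j` generates all of `Sym(m)`. -/
theorem pairwise_generating_cycles_sym (k m : ℕ) (hk : 1 ≤ k) (hm : 6 * k + 3 ≤ m)
    (hme : Even m) :
    ∃ g : Fin k → Equiv.Perm (Fin m),
      (∀ i : Fin k, (g i).IsCycle ∧ (g i).support = Finset.univ) ∧
      (∀ i j : Fin k, i ≠ j → Subgroup.closure {g i, g j} = ⊤) :=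
  pairwise_generating_cycles_sym_general k m hm hme
end

section
/- Let k be a positive integer and m ≥ 6k+3 with m odd. Then there exist m-cycles g₁, …, g_k in Sym(m) such that for every pair i ≠ j, the subgroup generated by g_i and g_j equals the alternating group Alt(m). -/
/-!
Choose a prime `r` with `k + 1 < r ≤ 2k + 2`, let `σ = (0 1 … m-1)` and `ρ = (0 1 … r-1)`, and
take `g_c = σ ρ^c` for `c < k`. Relabelling `{0, …, r-1}` by `t ↦ (c + 1) t mod r` conjugates `σ`
into `g_c`, so every `g_c` is an `m`-cycle, and it is even because `m` is odd.

For `a < b`, `g_a⁻¹ g_b = ρ^(b-a)` with `0 < b - a < r`, so `⟨g_a, g_b⟩` contains `ρ`, hence `σ`.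
The commutator `[ρ, σ]` is the 3-cycle `(0 1 r)`, its `ρ`-conjugate is `(1 2 r)`, and their
product is `(0 1 2) = (x σx σ²x)` for `x = 0`. Finally, `σ` and `(x σx σ²x)` generate a normal
subgroup of `Sym(m)`: the transposition `(x σx)` normalises it, and `σ` and `(x σx)` generate
`Sym(m)`. As `Alt(m)` is simple, this normal subgroup contains `Alt(m)`.
-/

open Equiv Equiv.Perm Subgroup

namespace Equiv.Perm

variable {α : Type*} [DecidableEq α] [Fintype α]

theorem mem_alternatingGroup_of_isCycle_of_support_eq_univ {σ : Perm α} (h1 : IsCycle σ)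
    (h2 : σ.support = Finset.univ) (hodd : Odd (Fintype.card α)) : σ ∈ alternatingGroup α := by
  rw [mem_alternatingGroup, h1.sign, h2, Finset.card_univ, hodd.neg_one_pow, neg_neg]

theorem alternatingGroup_le_closure_cycle_swap_mul_swap (hα : 5 ≤ Nat.card α) {σ : Perm α}
    (h1 : IsCycle σ) (h2 : σ.support = Finset.univ) {x y z : α} (hy : σ x = y) (hz : σ y = z) :
    alternatingGroup α ≤ closure {σ, swap x y * swap y z} := by
  subst hy hz
  set H := closure ({σ, swap x (σ x) * swap (σ x) (σ (σ x))} : Set (Perm α))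
  have hσ : σ ∈ H := subset_closure (Set.mem_insert _ _)
  have hτ : swap x (σ x) * swap (σ x) (σ (σ x)) ∈ H :=
    subset_closure (Set.mem_insert_of_mem _ rfl)
  have hswap : swap x (σ x) ∈ normalizer (H : Set (Perm α)) := by
    refine mem_normalizer_fintype fun g hg => ?_
    have hconj : H ≤ H.comap (MulAut.conj (swap x (σ x))).toMonoidHom := by
      rw [closure_le, Set.insert_subset_iff, Set.singleton_subset_iff]
      constructor
      · show swap x (σ x) * σ * (swap x (σ x))⁻¹ ∈ H
        have : swap x (σ x) * σ * (swap x (σ x))⁻¹ =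
            swap x (σ x) * swap (σ x) (σ (σ x)) * σ := by
          rw [swap_apply_apply]; simp [mul_assoc]
        exact this ▸ H.mul_mem hτ hσ
      · show swap x (σ x) * (swap x (σ x) * swap (σ x) (σ (σ x))) * (swap x (σ x))⁻¹ ∈ H
        have : swap x (σ x) * (swap x (σ x) * swap (σ x) (σ (σ x))) * (swap x (σ x))⁻¹ =
            (swap x (σ x) * swap (σ x) (σ (σ x)))⁻¹ := by
          simp
        exact this ▸ H.inv_mem hτ
    exact hconj hg
  have : H.Normal := by
    rw [← normalizer_eq_top_iff, eq_top_iff, ← closure_cycle_adjacent_swap h1 h2 x, closure_le,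
      Set.insert_subset_iff, Set.singleton_subset_iff]
    exact ⟨le_normalizer hσ, hswap⟩
  exact alternatingGroup_le_of_normal hα ⟨⟨σ, hσ⟩, 1, by simpa using h1.ne_one⟩

end Equiv.Perm

theorem Nat.mod_add_one_eq_ite {a r : ℕ} (hr : 0 < r) :
    a % r + 1 = if r ∣ a + 1 then r else (a + 1) % r := by
  have hlt : a % r + 1 ≤ r := Nat.mod_lt a hr
  have hmod : (a % r + 1) % r = (a + 1) % r := Nat.mod_add_mod a r 1
  split_ifs with hdvd
  · rw [Nat.mod_eq_zero_of_dvd hdvd] at hmod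
    rcases hlt.lt_or_eq with hlt | heq
    · rw [Nat.mod_eq_of_lt hlt] at hmod; omega
    · exact heq
  · rcases hlt.lt_or_eq with hlt | heq
    · rwa [Nat.mod_eq_of_lt hlt] at hmod
    · rw [heq, Nat.mod_self] at hmod
      exact absurd (Nat.dvd_of_mod_eq_zero hmod.symm) hdvd

section

variable {m : ℕ}

theorem Fin.val_swap_apply (a b t : Fin m) :
    (swap a b t : ℕ) = if (t : ℕ) = a then (b : ℕ) else if (t : ℕ) = b then (a : ℕ) else t := by
  simp only [swap_apply_def, Fin.val_eq_val]
  split_ifs <;> rfl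

theorem Fin.val_finRotate (t : Fin m) :
    (finRotate m t : ℕ) = if (t : ℕ) + 1 = m then 0 else (t : ℕ) + 1 := by
  obtain _ | m := m
  · exact t.elim0
  simp only [coe_finRotate, Fin.ext_iff, Fin.val_last]
  split_ifs <;> omega

def initialCycle (r : ℕ) (hr : r < m) : Perm (Fin m) :=
  Fin.cycleRange ⟨r - 1, by omega⟩

theorem val_initialCycle {r : ℕ} (hr : r < m) (t : Fin m) :
    (initialCycle r hr t : ℕ) =
      if (t : ℕ) + 1 < r then (t : ℕ) + 1 else if (t : ℕ) + 1 = r then 0 else t := by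
  rcases le_or_gt (t : ℕ) (r - 1) with htr | htr
  · simp only [initialCycle, Fin.coe_cycleRange_of_le (show t ≤ ⟨r - 1, _⟩ from htr), Fin.ext_iff]
    grind
  · rw [initialCycle, Fin.cycleRange_of_gt (show ⟨r - 1, _⟩ < t from htr)]
    grind

theorem val_initialCycle_pow {r : ℕ} (hr : r < m) (c : ℕ) (t : Fin m) :
    ((initialCycle r hr ^ c) t : ℕ) = if (t : ℕ) < r then ((t : ℕ) + c) % r else t := by
  induction c with
  | zero => split_ifs <;> simp [Nat.mod_eq_of_lt, *]
  | succ c ih =>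
    rw [pow_succ', Perm.mul_apply, val_initialCycle, ih]
    by_cases htr : (t : ℕ) < r
    · rw [if_pos htr, if_pos htr, ← add_assoc, ← Nat.mod_add_mod (↑t + c) r 1]
      have hu : ((t : ℕ) + c) % r + 1 ≤ r := Nat.mod_lt _ (by omega)
      rcases hu.lt_or_eq with hu | hu
      · rw [Nat.mod_eq_of_lt hu, if_pos hu]
      · rw [if_neg hu.not_lt, if_pos hu, hu, Nat.mod_self]
    · simp only [if_neg htr]
      split_ifs <;> omega

theorem orderOf_initialCycle {r : ℕ} (hr : r < m) (h2 : 2 ≤ r) :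
    orderOf (initialCycle r hr) = r := by
  have : NeZero m := ⟨by omega⟩
  rw [← lcm_cycleType, initialCycle, Fin.cycleType_cycleRange (by simp [Fin.ext_iff]; omega)]
  simp only [Multiset.lcm_singleton, normalize_eq]
  omega

noncomputable def initialMul (r q : ℕ) (hr : r < m) (hq : q.Coprime r) : Perm (Fin m) :=
  .ofBijective
    (fun t => if h : (t : ℕ) < r then ⟨t * q % r, (Nat.mod_lt _ (by omega)).trans hr⟩ else t) <| by
    refine Finite.injective_iff_bijective.mp fun t u htu => ?_
    split_ifs at htu with ht hu hu <;> simp only [Fin.ext_iff] at htu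
    · exact Fin.ext <|
        (Nat.ModEq.cancel_right_of_coprime (Nat.coprime_comm.mp hq) htu).eq_of_lt_of_lt ht hu
    · exact absurd (htu ▸ Nat.mod_lt _ (by omega)) hu
    · exact absurd (htu ▸ Nat.mod_lt _ (by omega)) ht
    · exact Fin.ext htu

theorem val_initialMul {r q : ℕ} (hr : r < m) (hq : q.Coprime r) (t : Fin m) :
    (initialMul r q hr hq t : ℕ) = if (t : ℕ) < r then t * q % r else t := by
  rw [initialMul, ofBijective_apply]
  split_ifs <;> rfl

theorem finRotate_mul_initialCycle_pow_eq_conj {r c : ℕ} (hr : r < m) (hc : (c + 1).Coprime r) :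
    finRotate m * initialCycle r hr ^ c =
      initialMul r (c + 1) hr hc * finRotate m * (initialMul r (c + 1) hr hc)⁻¹ := by
  rw [eq_mul_inv_iff_mul_eq]
  ext t
  simp only [Perm.mul_apply, val_initialMul, val_initialCycle_pow, Fin.val_finRotate]
  by_cases htr : (t : ℕ) < r
  · have hr0 : 0 < r := by omega
    have hu : (t : ℕ) * (c + 1) % r < r := Nat.mod_lt _ hr0
    have hv := Nat.mod_add_one_eq_ite (a := (t : ℕ) * (c + 1) + c) hr0
    rw [← Nat.mod_add_mod, show (t : ℕ) * (c + 1) + c + 1 = ((t : ℕ) + 1) * (c + 1) by ring] at hv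
    simp only [if_pos hu, if_pos htr]
    by_cases hlast : (t : ℕ) + 1 = r
    · rw [if_pos (hlast ▸ dvd_mul_right r (c + 1))] at hv
      split_ifs <;> omega
    · have hndvd : ¬ r ∣ ((t : ℕ) + 1) * (c + 1) := fun h =>
        absurd (Nat.le_of_dvd (by omega) ((Nat.coprime_comm.mp hc).dvd_of_dvd_mul_right h))
          (by omega)
      rw [if_neg hndvd] at hv
      have := Nat.mod_lt (((t : ℕ) + 1) * (c + 1)) hr0
      split_ifs <;> omega
  · simp only [if_neg htr]
    split_ifs <;> simp_all; omega

theorem isCycle_finRotate_mul_initialCycle_pow (hm : 2 ≤ m) {r c : ℕ} (hr : r < m)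
    (hc : (c + 1).Coprime r) : IsCycle (finRotate m * initialCycle r hr ^ c) := by
  rw [finRotate_mul_initialCycle_pow_eq_conj hr hc]
  exact (isCycle_finRotate_of_le hm).conj

theorem support_finRotate_mul_initialCycle_pow (hm : 2 ≤ m) {r c : ℕ} (hr : r < m)
    (hc : (c + 1).Coprime r) : (finRotate m * initialCycle r hr ^ c).support = Finset.univ := by
  rw [finRotate_mul_initialCycle_pow_eq_conj hr hc, support_conj,
    support_finRotate_of_le hm, Finset.map_univ_equiv]

theorem swap_mul_swap_mem_of_initialCycle_mem {r : ℕ} (hr3 : 3 ≤ r) (hrm : r + 1 < m)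
    {H : Subgroup (Perm (Fin m))} (hρ : initialCycle r (Nat.lt_of_succ_lt hrm) ∈ H)
    (hσ : finRotate m ∈ H) :
    swap ⟨0, by omega⟩ ⟨1, by omega⟩ * swap ⟨1, by omega⟩ ⟨2, by omega⟩ ∈ H := by
  have hA : initialCycle r (by omega) * finRotate m =
      swap ⟨0, by omega⟩ ⟨1, by omega⟩ * swap ⟨1, by omega⟩ ⟨r, by omega⟩ *
        (finRotate m * initialCycle r (by omega)) := by
    ext t
    simp only [Perm.mul_apply, Fin.val_swap_apply, val_initialCycle, Fin.val_finRotate]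
    grind
  have hB : initialCycle r (by omega) *
      (swap ⟨0, by omega⟩ ⟨1, by omega⟩ * swap ⟨1, by omega⟩ ⟨r, by omega⟩ : Perm (Fin m)) =
      swap ⟨1, by omega⟩ ⟨2, by omega⟩ * swap ⟨2, by omega⟩ ⟨r, by omega⟩ *
        initialCycle r (by omega) := by
    ext t
    simp only [Perm.mul_apply, Fin.val_swap_apply, val_initialCycle]
    grind
  have hAB : swap ⟨0, by omega⟩ ⟨1, by omega⟩ * swap ⟨1, by omega⟩ ⟨r, by omega⟩ *
      (swap ⟨1, by omega⟩ ⟨2, by omega⟩ * swap ⟨2, by omega⟩ ⟨r, by omega⟩) =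
      (swap ⟨0, by omega⟩ ⟨1, by omega⟩ * swap ⟨1, by omega⟩ ⟨2, by omega⟩ : Perm (Fin m)) := by
    ext t
    simp only [Perm.mul_apply, Fin.val_swap_apply]
    grind
  have hAH := eq_mul_inv_of_mul_eq hA.symm ▸
    H.mul_mem (H.mul_mem hρ hσ) (H.inv_mem (H.mul_mem hσ hρ))
  have hBH := eq_mul_inv_of_mul_eq hB.symm ▸ H.mul_mem (H.mul_mem hρ hAH) (H.inv_mem hρ)
  exact hAB ▸ H.mul_mem hAH hBH

theorem alternatingGroup_le_closure_finRotate_mul_initialCycle_pow {r : ℕ} (hr : r.Prime)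
    (hr3 : 3 ≤ r) (hrm : r + 1 < m) {a b : ℕ} (hab : a < b) (hb : b < r) :
    alternatingGroup (Fin m) ≤
      Subgroup.closure {finRotate m * initialCycle r (Nat.lt_of_succ_lt hrm) ^ a,
        finRotate m * initialCycle r (Nat.lt_of_succ_lt hrm) ^ b} := by
  set ρ := initialCycle r (Nat.lt_of_succ_lt hrm)
  set H := Subgroup.closure ({finRotate m * ρ ^ a, finRotate m * ρ ^ b} : Set (Perm (Fin m)))
  have ha : finRotate m * ρ ^ a ∈ H := subset_closure (Set.mem_insert _ _)
  have hb : finRotate m * ρ ^ b ∈ H := subset_closure (Set.mem_insert_of_mem _ rfl)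
  obtain ⟨d, rfl⟩ := Nat.exists_eq_add_of_lt hab
  have hd : ρ ^ (d + 1) ∈ H := by
    have : (finRotate m * ρ ^ a)⁻¹ * (finRotate m * ρ ^ (a + d + 1)) = ρ ^ (d + 1) := by
      rw [add_assoc, pow_add]; group
    exact this ▸ H.mul_mem (H.inv_mem ha) hb
  have hρ : ρ ∈ H := by
    have hcop : (d + 1).Coprime (orderOf ρ) := by
      rw [orderOf_initialCycle _ (by omega), Nat.coprime_comm, hr.coprime_iff_not_dvd]
      exact fun h => absurd (Nat.le_of_dvd (by omega) h) (by omega)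
    obtain ⟨n, hn⟩ := exists_pow_eq_self_of_coprime hcop
    exact hn ▸ H.pow_mem hd n
  have hσ : finRotate m ∈ H := by
    simpa using H.mul_mem ha (H.inv_mem (H.pow_mem hρ a))
  have hτ := swap_mul_swap_mem_of_initialCycle_mem hr3 hrm hρ hσ
  refine (alternatingGroup_le_closure_cycle_swap_mul_swap (by simp; omega)
    (isCycle_finRotate_of_le (by omega)) (support_finRotate_of_le (by omega)) ?_ ?_).trans
    ((closure_le H).mpr (Set.pair_subset hσ hτ))
  all_goals ext; simp only [Fin.val_finRotate]; grind

end

/-- For `k ≥ 1` and odd `m ≥ 6k+3`, there are `m`-cycles `g₁, …, g_k` in `Sym(m)` such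
that every pair `g_i, g_j` with `i ≠ j` generates the alternating group `Alt(m)`. -/
theorem pairwise_generating_cycles_alt (k m : ℕ) (hk : 1 ≤ k) (hm : 6 * k + 3 ≤ m)
    (hmo : Odd m) :
    ∃ g : Fin k → Equiv.Perm (Fin m),
      (∀ i : Fin k, (g i).IsCycle ∧ (g i).support = Finset.univ) ∧
      (∀ i j : Fin k, i ≠ j → Subgroup.closure {g i, g j} = alternatingGroup (Fin m)) := by
  obtain ⟨r, hr, hkr, hrk⟩ := Nat.exists_prime_lt_and_le_two_mul (k + 1) (by omega)
  have hrm : r < m := by omega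
  have hcyc (i : Fin k) : IsCycle (finRotate m * initialCycle r hrm ^ (i : ℕ)) ∧
      (finRotate m * initialCycle r hrm ^ (i : ℕ)).support = Finset.univ := by
    have hc : ((i : ℕ) + 1).Coprime r := Nat.coprime_comm.mp <| hr.coprime_iff_not_dvd.mpr
      fun h => absurd (Nat.le_of_dvd (by omega) h) (by omega)
    exact ⟨isCycle_finRotate_mul_initialCycle_pow (by omega) hrm hc,
      support_finRotate_mul_initialCycle_pow (by omega) hrm hc⟩
  refine ⟨fun i => finRotate m * initialCycle r hrm ^ (i : ℕ), hcyc, fun i j hij => ?_⟩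
  refine le_antisymm ((closure_le _).mpr (Set.pair_subset ?_ ?_)) ?_
  · exact mem_alternatingGroup_of_isCycle_of_support_eq_univ (hcyc i).1 (hcyc i).2 (by simpa)
  · exact mem_alternatingGroup_of_isCycle_of_support_eq_univ (hcyc j).1 (hcyc j).2 (by simpa)
  rcases Fin.lt_or_lt_of_ne hij with h | h
  · exact alternatingGroup_le_closure_finRotate_mul_initialCycle_pow hr (by omega) (by omega) h
      (by omega)
  · rw [Set.pair_comm]
    exact alternatingGroup_le_closure_finRotate_mul_initialCycle_pow hr (by omega) (by omega) h
      (by omega)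
end

section
/- Let p be the smallest prime factor of k, and let S = {X} ∪ {Y X^s : 0 ≤ s ≤ p−1} ⊂ H(k), a set of size p+1. Then every pair of distinct elements of S generates H(k), and p+1 is the maximal size of a subset of H(k) with this pairwise-generation property. -/
/-- The upper unitriangular 3×3 matrix over `ZMod k` with entries `a = M₁₂`, `b = M₂₃`,
`c = M₁₃`. -/
def heis (k : ℕ) (a b c : ZMod k) : Matrix (Fin 3) (Fin 3) (ZMod k) :=
  !![1, a, c; 0, 1, b; 0, 0, 1]

theorem heis_mul (k : ℕ) (a b c d e f : ZMod k) :
    heis k a b c * heis k d e f = heis k (a + d) (b + e) (c + f + a * e) := by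
  ext i j
  fin_cases i <;> fin_cases j <;>
    simp [heis, Matrix.mul_apply, Fin.sum_univ_three, Matrix.vecHead, Matrix.vecTail] <;> ring

theorem heis_zero (k : ℕ) : heis k 0 0 0 = 1 := by
  ext i j
  fin_cases i <;> fin_cases j <;> simp [heis, Matrix.one_apply, Matrix.vecHead, Matrix.vecTail]

/-- The upper unitriangular matrix `heis k a b c` as a unit of the matrix ring. -/
def heisUnit (k : ℕ) (a b c : ZMod k) : (Matrix (Fin 3) (Fin 3) (ZMod k))ˣ where
  val := heis k a b c
  inv := heis k (-a) (-b) (a * b - c)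
  val_inv := by
    rw [heis_mul, show a + -a = (0 : ZMod k) by ring, show b + -b = (0 : ZMod k) by ring,
      show c + (a * b - c) + a * -b = (0 : ZMod k) by ring, heis_zero]
  inv_val := by
    rw [heis_mul, show -a + a = (0 : ZMod k) by ring, show -b + b = (0 : ZMod k) by ring,
      show a * b - c + c + -a * b = (0 : ZMod k) by ring, heis_zero]

/-- The mod `k` Heisenberg group: the group of upper unitriangular 3×3 matrices over
`ZMod k`, as a subgroup of the units of the matrix ring. -/
def Heis (k : ℕ) : Subgroup (Matrix (Fin 3) (Fin 3) (ZMod k))ˣ where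
  carrier := {u | ∃ a b c : ZMod k, u = heisUnit k a b c}
  mul_mem' := by
    rintro _ _ ⟨a, b, c, rfl⟩ ⟨d, e, f, rfl⟩
    exact ⟨a + d, b + e, c + f + a * e, Units.ext (by rw [Units.val_mul]; exact heis_mul ..)⟩
  one_mem' := ⟨0, 0, 0, Units.ext (heis_zero k).symm⟩
  inv_mem' := by
    rintro _ ⟨a, b, c, rfl⟩
    exact ⟨-a, -b, a * b - c, Units.ext rfl⟩

/-- The generator `X = E₁₂(1)` of the Heisenberg group. -/
def HeisX (k : ℕ) : Heis k := ⟨heisUnit k 1 0 0, 1, 0, 0, rfl⟩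

/-- The generator `Y = E₂₃(1)` of the Heisenberg group. -/
def HeisY (k : ℕ) : Heis k := ⟨heisUnit k 0 1 0, 0, 1, 0, rfl⟩

/-- The central element `Z = E₁₃(1)` of the Heisenberg group. -/
def HeisZ (k : ℕ) : Heis k := ⟨heisUnit k 0 0 1, 0, 0, 1, rfl⟩


/-!
The abelianization of `H(k)` is `(ZMod k)²`, via `mk k a b c ↦ (a, b)`, and the commutator of
two elements is the central element whose corner entry is the wedge `a₁ b₂ - a₂ b₁` of their
images. Hence two elements generate `H(k)` exactly when this wedge is a unit of `ZMod k`: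
if it is, the commutator generates the centre and integer combinations of the two images cover
`(ZMod k)²`; if it is not, modulo the ideal it generates some nonzero linear form on `(ZMod k)²`
kills both images and hence the whole group.

For `s, t < p` the wedges of `(1, 0)`, `(s, 1)`, `(t, 1)` are `±1` and `s - t`, units since
`0 < |s - t| < p`. Conversely, reducing modulo `p` sends the images of a pairwise generating set
to vectors of `𝔽_p²` with pairwise nonzero wedges, that is, to distinct points of the projective
line `ℙ¹(𝔽_p)`, which has `p + 1` points.
-/

section Wedge

variable {R : Type*} [CommRing R]

def wedge (u v : R × R) : R := u.1 * v.2 - u.2 * v.1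

@[simp]
lemma wedge_self (u : R × R) : wedge u u = 0 := by
  rw [wedge]; ring

lemma wedge_comm (u v : R × R) : wedge v u = -wedge u v := by
  rw [wedge, wedge]; ring

lemma map_wedge {S : Type*} [CommRing S] (r : R →+* S) (u v : R × R) :
    r (wedge u v) = wedge (Prod.map r r u) (Prod.map r r v) := by
  simp [wedge]

/-- Cramer's rule in the plane. -/
lemma wedge_smul_add_wedge_smul (u v w : R × R) :
    wedge w v • u + wedge u w • v = wedge u v • w := by
  ext <;> simp only [wedge, Prod.fst_add, Prod.snd_add, Prod.smul_fst, Prod.smul_snd,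
    smul_eq_mul] <;> ring

/-- The slope of the line through `0` and `w`, as a point of `F ∪ {∞} = ℙ¹(F)`. -/
def planeSlope {F : Type*} [Field F] [DecidableEq F] (w : F × F) : Option F :=
  if w.2 = 0 then none else some (w.1 / w.2)

lemma wedge_eq_zero_of_planeSlope_eq {F : Type*} [Field F] [DecidableEq F] {u v : F × F}
    (h : planeSlope u = planeSlope v) : wedge u v = 0 := by
  unfold planeSlope at h
  by_cases hu : u.2 = 0 <;> by_cases hv : v.2 = 0 <;>
    simp only [hu, hv, if_true, if_false, reduceCtorEq, Option.some.injEq] at h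
  · simp [wedge, hu, hv]
  · rw [div_eq_div_iff hu hv] at h
    rw [wedge]
    linear_combination h

lemma ncard_le_card_add_one_of_pairwise_wedge_ne_zero {F ι : Type*} [Field F] [Finite F]
    (v : ι → F × F) {T : Set ι} (hT : T.Pairwise fun i j => wedge (v i) (v j) ≠ 0) :
    T.ncard ≤ Nat.card F + 1 := by
  classical
  have hinj : T.InjOn (planeSlope ∘ v) := fun i hi j hj hij =>
    hT.eq hi hj (not_not_intro (wedge_eq_zero_of_planeSlope_eq hij))
  simpa [Set.ncard_univ, Finite.card_option] using
    Set.ncard_le_ncard_of_injOn _ (fun i _ => Set.mem_univ _) hinj Set.finite_univ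

end Wedge

lemma ZMod.isUnit_natCast_sub_of_lt_minFac {k s t : ℕ} (hst : s ≠ t) (hs : s < k.minFac)
    (ht : t < k.minFac) : IsUnit ((s : ZMod k) - t) := by
  have hunit {m : ℕ} (h₀ : m ≠ 0) (h : m < k.minFac) : IsUnit (m : ZMod k) :=
    (ZMod.isUnit_iff_coprime m k).mpr (Nat.coprime_of_lt_minFac h₀ h).symm
  rcases hst.lt_or_gt with h | h
  · rw [← neg_sub, ← Nat.cast_sub h.le]
    exact (hunit (by omega) (by omega)).neg
  · rw [← Nat.cast_sub h.le]
    exact hunit (by omega) (by omega)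

open scoped commutatorElement

namespace Heis

variable {k : ℕ}

def mk (k : ℕ) (a b c : ZMod k) : Heis k := ⟨heisUnit k a b c, a, b, c, rfl⟩

lemma exists_eq_mk (g : Heis k) : ∃ a b c, g = mk k a b c := by
  obtain ⟨a, b, c, h⟩ := g.2
  exact ⟨a, b, c, Subtype.ext h⟩

lemma mk_mul (a b c d e f : ZMod k) :
    mk k a b c * mk k d e f = mk k (a + d) (b + e) (c + f + a * e) :=
  Subtype.ext (Units.ext (heis_mul ..))

lemma mk_zero : mk k 0 0 0 = 1 := Subtype.ext (Units.ext (heis_zero k))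

lemma mk_inv (a b c : ZMod k) : (mk k a b c)⁻¹ = mk k (-a) (-b) (a * b - c) :=
  Subtype.ext (Units.ext rfl)

lemma mk_inj {a b c d e f : ZMod k} : mk k a b c = mk k d e f ↔ a = d ∧ b = e ∧ c = f := by
  refine ⟨fun h => ?_, by rintro ⟨rfl, rfl, rfl⟩; rfl⟩
  have h' : heis k a b c = heis k d e f := congrArg (fun g : Heis k => g.1.1) h
  exact ⟨by simpa [heis] using congrFun (congrFun h' 0) 1,
    by simpa [heis] using congrFun (congrFun h' 1) 2,
    by simpa [heis] using congrFun (congrFun h' 0) 2⟩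

lemma heisX_eq : HeisX k = mk k 1 0 0 := rfl

lemma heisY_eq : HeisY k = mk k 0 1 0 := rfl

lemma heisX_pow (n : ℕ) : HeisX k ^ n = mk k n 0 0 := by
  induction n with
  | zero => rw [pow_zero, Nat.cast_zero, mk_zero]
  | succ n ih => rw [pow_succ, ih, heisX_eq, mk_mul]; simp

lemma heisY_mul_heisX_pow (n : ℕ) : HeisY k * HeisX k ^ n = mk k n 1 0 := by
  rw [heisX_pow, heisY_eq, mk_mul, mk_inj]
  exact ⟨zero_add _, add_zero _, by ring⟩

lemma mk_zero_zero_zpow (c : ZMod k) (n : ℤ) : mk k 0 0 c ^ n = mk k 0 0 (n * c) := by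
  induction n using Int.induction_on with
  | zero => rw [zpow_zero, Int.cast_zero, zero_mul, mk_zero]
  | succ n ih =>
    rw [zpow_add_one, ih, mk_mul, mk_inj]
    exact ⟨by ring, by ring, by push_cast; ring⟩
  | pred n ih =>
    rw [zpow_sub_one, ih, mk_inv, mk_mul, mk_inj]
    exact ⟨by ring, by ring, by push_cast; ring⟩

/-- The image `(a, b)` of `mk k a b c` in the abelianization `(ZMod k)²`. -/
def proj (g : Heis k) : ZMod k × ZMod k := (g.1.1 0 1, g.1.1 1 2)

@[simp]
lemma proj_mk (a b c : ZMod k) : proj (mk k a b c) = (a, b) := by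
  simp [proj, mk, heisUnit, heis]

@[simps]
def projHom (k : ℕ) : Heis k →* Multiplicative (ZMod k × ZMod k) where
  toFun g := .ofAdd (proj g)
  map_one' := by rw [← mk_zero, proj_mk]; rfl
  map_mul' g h := by
    obtain ⟨a, b, c, rfl⟩ := exists_eq_mk g
    obtain ⟨d, e, f, rfl⟩ := exists_eq_mk h
    rw [mk_mul, proj_mk, proj_mk, proj_mk]; rfl

lemma proj_zpow_mul_zpow (g h : Heis k) (x y : ℤ) :
    proj (g ^ x * h ^ y) = (x : ZMod k) • proj g + (y : ZMod k) • proj h := by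
  change (projHom k (g ^ x * h ^ y)).toAdd = _
  rw [map_mul, map_zpow, map_zpow, toAdd_mul, toAdd_zpow, toAdd_zpow, Int.cast_smul_eq_zsmul,
    Int.cast_smul_eq_zsmul]
  rfl

lemma commutator_eq (g h : Heis k) : ⁅g, h⁆ = mk k 0 0 (wedge (proj g) (proj h)) := by
  obtain ⟨a, b, c, rfl⟩ := exists_eq_mk g
  obtain ⟨d, e, f, rfl⟩ := exists_eq_mk h
  rw [commutatorElement_def, mk_inv, mk_inv, mk_mul, mk_mul, mk_mul, mk_inj]
  simp only [proj_mk, wedge]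
  refine ⟨by ring, by ring, by ring⟩

lemma exists_eq_mk_zero_zero_mul_of_proj_eq {g h : Heis k} (hgh : proj g = proj h) :
    ∃ c, g = mk k 0 0 c * h := by
  obtain ⟨a, b, c, rfl⟩ := exists_eq_mk g
  obtain ⟨d, e, f, rfl⟩ := exists_eq_mk h
  simp only [proj_mk, Prod.mk.injEq] at hgh
  obtain ⟨rfl, rfl⟩ := hgh
  exact ⟨c - f, by rw [mk_mul, mk_inj]; exact ⟨by ring, by ring, by ring⟩⟩

lemma eq_zero_of_closure_eq_top {A : Type*} [AddMonoid A] {s : Set (Heis k)}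
    (hs : Subgroup.closure s = ⊤) (ℓ : ZMod k × ZMod k →+ A) (hℓ : ∀ g ∈ s, ℓ (proj g) = 0) :
    ℓ = 0 := by
  have hcomp : (AddMonoidHom.toMultiplicative ℓ).comp (projHom k) = 1 := by
    refine MonoidHom.eq_of_eqOn_dense hs fun g hg => ?_
    change Multiplicative.ofAdd (ℓ (proj g)) = 1
    rw [hℓ g hg, ofAdd_zero]
  ext ⟨a, b⟩
  simpa using DFunLike.congr_fun hcomp (mk k a b 0)

lemma closure_pair_eq_top_of_isUnit_wedge {g₁ g₂ : Heis k}
    (hD : IsUnit (wedge (proj g₁) (proj g₂))) : Subgroup.closure {g₁, g₂} = ⊤ := by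
  set H := Subgroup.closure {g₁, g₂}
  obtain ⟨e, he⟩ := hD.exists_left_inv
  have hg₁ : g₁ ∈ H := Subgroup.subset_closure (Set.mem_insert _ _)
  have hg₂ : g₂ ∈ H := Subgroup.subset_closure (Set.mem_insert_of_mem _ rfl)
  have hcentre (c : ZMod k) : mk k 0 0 c ∈ H := by
    obtain ⟨n, hn⟩ := ZMod.intCast_surjective (c * e)
    have hc : ⁅g₁, g₂⁆ ^ n = mk k 0 0 c := by
      rw [commutator_eq, mk_zero_zero_zpow, hn, mul_assoc, he, mul_one]
    rw [← hc, commutatorElement_def]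
    exact zpow_mem (mul_mem (mul_mem (mul_mem hg₁ hg₂) (inv_mem hg₁)) (inv_mem hg₂)) n
  refine eq_top_iff.mpr fun g _ => ?_
  obtain ⟨x, hx⟩ := ZMod.intCast_surjective (e * wedge (proj g) (proj g₂))
  obtain ⟨y, hy⟩ := ZMod.intCast_surjective (e * wedge (proj g₁) (proj g))
  have hproj : proj g = proj (g₁ ^ x * g₂ ^ y) := by
    rw [proj_zpow_mul_zpow, hx, hy, mul_smul, mul_smul, ← smul_add, wedge_smul_add_wedge_smul,
      smul_smul, he, one_smul]
  obtain ⟨c, rfl⟩ := exists_eq_mk_zero_zero_mul_of_proj_eq hproj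
  exact mul_mem (hcentre c) (mul_mem (zpow_mem hg₁ x) (zpow_mem hg₂ y))

lemma eq_zero_of_wedge_eq_zero_of_closure_pair_eq_top {R : Type*} [CommRing R]
    (r : ZMod k →+* R) {g₁ g₂ : Heis k} (h : Subgroup.closure {g₁, g₂} = ⊤) {u : R × R}
    (h₁ : wedge u (Prod.map r r (proj g₁)) = 0) (h₂ : wedge u (Prod.map r r (proj g₂)) = 0) :
    u = 0 := by
  let ℓ : ZMod k × ZMod k →+ R :=
    AddMonoidHom.mk' (fun w => wedge u (Prod.map r r w)) fun v w => by simp [wedge]; ring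
  have hℓ : ℓ = 0 := eq_zero_of_closure_eq_top h ℓ (by simp [ℓ, h₁, h₂])
  have hX := DFunLike.congr_fun hℓ (1, 0)
  have hY := DFunLike.congr_fun hℓ (0, 1)
  simp only [ℓ, AddMonoidHom.mk'_apply, AddMonoidHom.zero_apply, wedge, Prod.map, map_one,
    map_zero, mul_zero, mul_one, zero_sub, neg_eq_zero, sub_zero] at hX hY
  exact Prod.ext hY hX

lemma isUnit_wedge_of_closure_pair_eq_top {g₁ g₂ : Heis k}
    (h : Subgroup.closure {g₁, g₂} = ⊤) : IsUnit (wedge (proj g₁) (proj g₂)) := by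
  by_contra hD
  set M := Ideal.span {wedge (proj g₁) (proj g₂)}
  let r := Ideal.Quotient.mk M
  have : Nontrivial (ZMod k ⧸ M) :=
    Ideal.Quotient.nontrivial_iff.mpr (Ideal.span_singleton_ne_top hD)
  have hr : wedge (Prod.map r r (proj g₁)) (Prod.map r r (proj g₂)) = 0 := by
    rw [← map_wedge]; exact Ideal.Quotient.eq_zero_iff_mem.mpr (Ideal.mem_span_singleton_self _)
  -- Modulo `M` the two images have zero wedge, so wedging with either one kills both; hence
  -- both images vanish, and then wedging with `(1, 0)` kills both as well.
  have hv₁ := eq_zero_of_wedge_eq_zero_of_closure_pair_eq_top r h (wedge_self _) hr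
  have hv₂ := eq_zero_of_wedge_eq_zero_of_closure_pair_eq_top r h
    (by rw [wedge_comm, hr, neg_zero]) (wedge_self _)
  have h10 : ((1, 0) : (ZMod k ⧸ M) × (ZMod k ⧸ M)) = 0 :=
    eq_zero_of_wedge_eq_zero_of_closure_pair_eq_top r h
      (by rw [hv₁]; simp [wedge]) (by rw [hv₂]; simp [wedge])
  exact one_ne_zero (congrArg Prod.fst h10)

theorem closure_pair_eq_top_iff {g₁ g₂ : Heis k} :
    Subgroup.closure {g₁, g₂} = ⊤ ↔ IsUnit (wedge (proj g₁) (proj g₂)) :=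
  ⟨isUnit_wedge_of_closure_pair_eq_top, closure_pair_eq_top_of_isUnit_wedge⟩

/-- `X` together with `Y X^s` for `s < p`. -/
def pairwiseGeneratingSet (k p : ℕ) : Set (Heis k) :=
  insert (mk k 1 0 0) ((fun s : ℕ => mk k s 1 0) '' Set.Iio p)

lemma ncard_pairwiseGeneratingSet {p : ℕ} (hk : 1 < k) (hpk : p ≤ k) :
    (pairwiseGeneratingSet k p).ncard = p + 1 := by
  have : Fact (1 < k) := ⟨hk⟩
  have hinj : Set.InjOn (fun s : ℕ => mk k s 1 0) (Set.Iio p) := fun s hs t ht hst => by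
    have hcast : (s : ZMod k) = t := (mk_inj.mp hst).1
    rwa [ZMod.natCast_eq_natCast_iff', Nat.mod_eq_of_lt (hs.trans_le hpk),
      Nat.mod_eq_of_lt (ht.trans_le hpk)] at hcast
  have hX : mk k 1 0 0 ∉ (fun s : ℕ => mk k s 1 0) '' Set.Iio p := by
    rintro ⟨s, -, hs⟩
    exact one_ne_zero (mk_inj.mp hs).2.1
  rw [pairwiseGeneratingSet, Set.ncard_insert_of_notMem hX, hinj.ncard_image,
    ← Finset.coe_range, Set.ncard_coe_finset, Finset.card_range]

lemma closure_pair_eq_top_of_mem_pairwiseGeneratingSet {p : ℕ} (hp : p ≤ k.minFac)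
    {g₁ g₂ : Heis k} (h₁ : g₁ ∈ pairwiseGeneratingSet k p) (h₂ : g₂ ∈ pairwiseGeneratingSet k p)
    (hne : g₁ ≠ g₂) : Subgroup.closure {g₁, g₂} = ⊤ := by
  apply closure_pair_eq_top_of_isUnit_wedge
  rcases h₁ with rfl | ⟨s, hs, rfl⟩ <;> rcases h₂ with rfl | ⟨t, ht, rfl⟩
  · exact absurd rfl hne
  · simp [wedge]
  · simp [wedge]
  · have hst : s ≠ t := by rintro rfl; exact hne rfl
    simpa [wedge] using ZMod.isUnit_natCast_sub_of_lt_minFac hst (hs.trans_le hp) (ht.trans_le hp)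

lemma ncard_le_of_pairwise_closure_eq_top {p : ℕ} [Fact p.Prime] (hpk : p ∣ k) {T : Set (Heis k)}
    (hT : T.Pairwise fun g₁ g₂ => Subgroup.closure {g₁, g₂} = ⊤) : T.ncard ≤ p + 1 := by
  let r := ZMod.castHom hpk (ZMod p)
  have hwedge : T.Pairwise fun g₁ g₂ =>
      wedge (Prod.map r r (proj g₁)) (Prod.map r r (proj g₂)) ≠ 0 :=
    hT.imp fun g₁ g₂ h => by
      rw [← map_wedge]; exact ((closure_pair_eq_top_iff.mp h).map r).ne_zero
  simpa using ncard_le_card_add_one_of_pairwise_wedge_ne_zero _ hwedge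

end Heis

/-- Let `p` be the smallest prime factor of `k ≥ 2` and
`S = {X} ∪ {Y X^s : 0 ≤ s ≤ p−1} ⊆ H(k)`, a set of size `p + 1`.  Every pair of distinct
elements of `S` generates `H(k)`, and `p + 1` is the maximal size of a subset of `H(k)`
with this pairwise-generation property. -/
theorem heis_pairwise_generating_set (k : ℕ) (hk : 2 ≤ k) (p : ℕ) (hp : p = k.minFac)
    (S : Set (Heis k))
    (hS : S = insert (HeisX k) {g : Heis k | ∃ s : ℕ, s < p ∧ g = HeisY k * (HeisX k) ^ s}) :
    S.ncard = p + 1 ∧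
    (∀ g₁ ∈ S, ∀ g₂ ∈ S, g₁ ≠ g₂ → Subgroup.closure {g₁, g₂} = ⊤) ∧
    (∀ T : Set (Heis k),
      (∀ g₁ ∈ T, ∀ g₂ ∈ T, g₁ ≠ g₂ → Subgroup.closure {g₁, g₂} = ⊤) →
      T.ncard ≤ p + 1) := by
  have hS' : S = Heis.pairwiseGeneratingSet k p := by
    simp only [hS, Heis.heisY_mul_heisX_pow]
    rw [Heis.pairwiseGeneratingSet, Heis.heisX_eq]
    congr 1
    ext g
    simp [eq_comm]
  have : Fact p.Prime := ⟨hp ▸ Nat.minFac_prime (by omega)⟩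
  subst hS'
  refine ⟨Heis.ncard_pairwiseGeneratingSet (by omega) (hp ▸ Nat.minFac_le (by omega)),
    fun g₁ h₁ g₂ h₂ => Heis.closure_pair_eq_top_of_mem_pairwiseGeneratingSet hp.le h₁ h₂,
    fun T hT => Heis.ncard_le_of_pairwise_closure_eq_top (hp ▸ Nat.minFac_dvd k) hT⟩
end

section
/- Let k ≥ 2, let m divide k with 1 < m < k and gcd(m, k/m) = 1, let ℓ = k/m, and let ζ be a primitive k-th root of unity. Define r : H(k) → GL_m(Q(ζ)) by r(X) = diag(ζ, ζ^{ℓ+1}, …, ζ^{(m−1)ℓ+1}), r(Y) the cyclic shift matrix with top-right entry ζ^m and subdiagonal entries 1, and r(Z) = ζ^ℓ I. Then r is a well-defined group homomorphism, i.e. these matrices satisfy the relations X^k = Y^k = Z^k = 1, XZ = ZX, YZ = ZY, and XYX⁻¹Y⁻¹ = Z. -/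
/-!
The `m`-th power of the cyclic shift `S` with corner entry `c` is `c • 1`: each basis vector
travels once around the cycle and passes the corner exactly once. Hence `r(Y)^k = ((ζ^m)^ℓ) • 1
= 1`, and the scalar matrix `r(Z)` is central. Conjugating `S` by `diagonal d` rescales the entry
`(i, j)` by `d i / d j`; for `d i = ζ^(iℓ + 1)` this factor is `ζ^ℓ` on the subdiagonal and
`ζ^(1 - (m-1)ℓ) = ζ^ℓ · ζ^(-mℓ) = ζ^ℓ` at the corner, which is `XY = Z·YX`.
-/

open Matrix

section CyclicShift

variable {R : Type*} [Semiring R]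

def cyclicShift (m : ℕ) (c : R) : Matrix (Fin m) (Fin m) R :=
  of fun i j : Fin m =>
    if i.val = j.val + 1 then 1 else if i.val = 0 ∧ j.val = m - 1 then c else 0

theorem cyclicShift_succ_apply (n : ℕ) (c : R) (i j : Fin (n + 1)) :
    cyclicShift (n + 1) c i j = if j = i - 1 then (if i = 0 then c else 1) else 0 := by
  simp only [cyclicShift, of_apply, Fin.ext_iff, Fin.coe_sub_one, Fin.val_zero,
    Nat.add_sub_cancel]
  split_ifs <;> first | rfl | omega

theorem cyclicShift_succ_mul_apply (n : ℕ) (c : R) (A : Matrix (Fin (n + 1)) (Fin (n + 1)) R)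
    (i j : Fin (n + 1)) :
    (cyclicShift (n + 1) c * A) i j = (if i = 0 then c else 1) * A (i - 1) j := by
  simp [mul_apply, cyclicShift_succ_apply, ite_mul]

theorem cyclicShift_succ_pow_apply (n : ℕ) (c : R) {t : ℕ} (ht : t ≤ n + 1)
    (i j : Fin (n + 1)) :
    (cyclicShift (n + 1) c ^ t) i j =
      if i.val = j.val + t then 1 else if i.val + (n + 1) = j.val + t then c else 0 := by
  induction t generalizing i j with
  | zero =>
    rw [pow_zero, one_apply]
    simp only [Fin.ext_iff]
    have := j.isLt
    split_ifs <;> first | rfl | omega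
  | succ t ih =>
    rw [pow_succ', cyclicShift_succ_mul_apply, ih (by omega), Fin.coe_sub_one]
    simp only [Fin.ext_iff, Fin.val_zero]
    have := i.isLt
    have := j.isLt
    split_ifs <;> first | (exfalso; omega) | simp

theorem cyclicShift_pow_self (m : ℕ) (c : R) : cyclicShift m c ^ m = c • 1 := by
  cases m with
  | zero => ext i; exact i.elim0
  | succ n =>
    ext i j
    rw [cyclicShift_succ_pow_apply n c le_rfl, Matrix.smul_apply, one_apply]
    simp only [Fin.ext_iff]
    have := i.isLt
    have := j.isLt
    split_ifs <;> first | (exfalso; omega) | simp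

end CyclicShift

theorem diagonal_mul_cyclicShift {R : Type*} [CommSemiring R] (m ℓ : ℕ) (ζ : R)
    (h : ζ ^ (m * ℓ) = 1) :
    diagonal (fun i : Fin m => ζ ^ (i.val * ℓ + 1)) * cyclicShift m (ζ ^ m) =
      ζ ^ ℓ • (cyclicShift m (ζ ^ m) * diagonal fun i : Fin m => ζ ^ (i.val * ℓ + 1)) := by
  ext i j
  simp only [diagonal_mul, mul_diagonal, Matrix.smul_apply, cyclicShift, of_apply, smul_eq_mul]
  split_ifs with hsucc hwrap
  · rw [hsucc]; ring
  · obtain ⟨n, rfl⟩ : ∃ n, m = n + 1 := ⟨m - 1, by omega⟩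
    rw [hwrap.1, hwrap.2, Nat.add_sub_cancel]
    calc ζ ^ (0 * ℓ + 1) * ζ ^ (n + 1)
        = ζ ^ ((n + 1) * ℓ) * (ζ ^ (0 * ℓ + 1) * ζ ^ (n + 1)) := by rw [h, one_mul]
      _ = ζ ^ ℓ * (ζ ^ (n + 1) * ζ ^ (n * ℓ + 1)) := by ring
  · simp

theorem heisenberg_rep_well_defined_general (k m : ℕ) (hdvd : m ∣ k)
    (K : Type*) [Field K] (ζ : K)
    (hζ : IsPrimitiveRoot ζ k) :
    letI ℓ : ℕ := k / m
    letI rX : Matrix (Fin m) (Fin m) K :=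
      Matrix.diagonal fun i : Fin m => ζ ^ (i.val * ℓ + 1)
    letI rY : Matrix (Fin m) (Fin m) K :=
      Matrix.of fun i j : Fin m =>
        if i.val = j.val + 1 then 1 else if i.val = 0 ∧ j.val = m - 1 then ζ ^ m else 0
    letI rZ : Matrix (Fin m) (Fin m) K := ζ ^ ℓ • (1 : Matrix (Fin m) (Fin m) K)
    rX ^ k = 1 ∧ rY ^ k = 1 ∧ rZ ^ k = 1 ∧
      rX * rZ = rZ * rX ∧ rY * rZ = rZ * rY ∧ rX * rY = rZ * (rY * rX) := by
  have hζk : ζ ^ k = 1 := hζ.pow_eq_one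
  have hmℓ : m * (k / m) = k := Nat.mul_div_cancel' hdvd
  have hζ_pow_k (a : ℕ) : (ζ ^ a) ^ k = 1 := by
    rw [← pow_mul, mul_comm, pow_mul, hζk, one_pow]
  have hscalar_comm (A : Matrix (Fin m) (Fin m) K) :
      A * ζ ^ (k / m) • 1 = ζ ^ (k / m) • 1 * A := by
    rw [mul_smul_one, smul_one_mul]
  refine ⟨?_, ?_, ?_, hscalar_comm _, hscalar_comm _, ?_⟩
  · rw [diagonal_pow, ← diagonal_one]
    exact congrArg diagonal (funext fun i => hζ_pow_k _)
  · change cyclicShift m (ζ ^ m) ^ k = 1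
    rw [← hmℓ, pow_mul, cyclicShift_pow_self, smul_pow, one_pow, ← pow_mul, hmℓ, hζk,
      one_smul]
  · rw [smul_pow, one_pow, hζ_pow_k, one_smul]
  · rw [smul_one_mul]
    exact diagonal_mul_cyclicShift m (k / m) ζ (by rwa [hmℓ])

/-- Let `m ∣ k` with `1 < m < k` and `gcd(m, k/m) = 1`, let `ℓ = k/m`, and let `ζ` be a
primitive `k`-th root of unity.  The matrices
`r(X) = diag(ζ, ζ^{ℓ+1}, …, ζ^{(m−1)ℓ+1})`, `r(Y)` the cyclic shift matrix with
top-right entry `ζ^m` and subdiagonal entries `1`, and `r(Z) = ζ^ℓ I` satisfy the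
defining relations of the mod `k` Heisenberg group:
`X^k = Y^k = Z^k = 1`, `XZ = ZX`, `YZ = ZY`, and `XY = Z·YX` (i.e. `XYX⁻¹Y⁻¹ = Z`);
hence `r` defines a group homomorphism `H(k) → GL_m(ℚ(ζ))`. -/
theorem heisenberg_rep_well_defined (k m : ℕ) (hm : 1 < m) (hmk : m < k) (hdvd : m ∣ k)
    (hcop : Nat.Coprime m (k / m)) (K : Type*) [Field K] (ζ : K)
    (hζ : IsPrimitiveRoot ζ k) :
    letI ℓ : ℕ := k / m
    letI rX : Matrix (Fin m) (Fin m) K :=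
      Matrix.diagonal fun i : Fin m => ζ ^ (i.val * ℓ + 1)
    letI rY : Matrix (Fin m) (Fin m) K :=
      Matrix.of fun i j : Fin m =>
        if i.val = j.val + 1 then 1 else if i.val = 0 ∧ j.val = m - 1 then ζ ^ m else 0
    letI rZ : Matrix (Fin m) (Fin m) K := ζ ^ ℓ • (1 : Matrix (Fin m) (Fin m) K)
    rX ^ k = 1 ∧ rY ^ k = 1 ∧ rZ ^ k = 1 ∧
      rX * rZ = rZ * rX ∧ rY * rZ = rZ * rY ∧ rX * rY = rZ * (rY * rX) :=
  heisenberg_rep_well_defined_general k m hdvd K ζ hζ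
end
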